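/- There exists a sparse Cantor set C₀ ⊂ [0,1] such that every orientation-preserving C¹ diffeomorphism of ℝ preserving C₀ restricts to the identity on C₀ (i.e., 𝔡𝔦𝔣𝔣^{1,+}(C₀) is trivial). -/

import Mathlib

open Set Filter Topology Asymptotics

/-- A Cantor subset of the reals: nonempty, compact, perfect, totally disconnected. -/
def IsCantorSet (C : Set ℝ) : Prop :=
  C.Nonempty ∧ IsCompact C ∧ Perfect C ∧ IsTotallyDisconnected C

/-- `C` is `σ`-sparse: any two points of `C` bound a complementary open interval of
relative length at least `σ`. -/
def SparseSet (σ : ℝ) (C : Set ℝ) : Prop :=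
  ∀ a ∈ C, ∀ b ∈ C, a < b →
    ∃ α β : ℝ, a ≤ α ∧ α < β ∧ β ≤ b ∧ Set.Ioo α β ∩ C = ∅ ∧ σ * (b - a) ≤ β - α

/-- `φ` is a `C¹` diffeomorphism of `ℝ` with inverse `ψ`. -/
def IsC1DiffeoPair (φ ψ : ℝ → ℝ) : Prop :=
  ContDiff ℝ 1 φ ∧ ContDiff ℝ 1 ψ ∧ Function.LeftInverse ψ φ ∧ Function.RightInverse ψ φ


/-!
The set `C₀` is cut out of `[0,1]` by removing middle gaps, the intervals of depth `n` having
length `ℓₙ` with `ℓₙ₊₁ = ℓₙ / 2^(n+2)`. A gap of depth `n` then has length between `ℓₙ/2` and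
`ℓₙ`, and is at most `2^(-n)` times as long as any shallower gap. An increasing bijection
preserving `C₀` maps gaps onto gaps, and a `C¹` diffeomorphism and its inverse are both
`K`-Lipschitz on `[0,1]`; once `2^n > K` a gap of depth `n` must therefore go to a gap of the
same depth. Being increasing, the map permutes the finitely many gaps of depth `n` trivially,
so it fixes their endpoints, and these are dense in `C₀`.
-/

section Gaps

def IsGap (C : Set ℝ) (p q : ℝ) : Prop :=
  p ∈ C ∧ q ∈ C ∧ p < q ∧ Disjoint (Ioo p q) C

variable {C : Set ℝ} {p q p' q' : ℝ}

theorem IsGap.image {φ : ℝ → ℝ} (hφ : StrictMono φ) (hC : φ '' C = C) (h : IsGap C p q) :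
    IsGap C (φ p) (φ q) := by
  obtain ⟨hp, hq, hpq, hdisj⟩ := h
  refine ⟨hC ▸ mem_image_of_mem φ hp, hC ▸ mem_image_of_mem φ hq, hφ hpq, ?_⟩
  rw [Set.disjoint_left]
  rintro _ ⟨hpz, hzq⟩ hz
  rw [← hC] at hz
  obtain ⟨y, hy, rfl⟩ := hz
  exact Set.disjoint_left.mp hdisj ⟨hφ.lt_iff_lt.mp hpz, hφ.lt_iff_lt.mp hzq⟩ hy

theorem IsGap.eq_of_mem_Ioo {m : ℝ} (h : IsGap C p q) (h' : IsGap C p' q')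
    (hm : m ∈ Ioo p q) (hm' : m ∈ Ioo p' q') : p = p' ∧ q = q' := by
  have notMem {a b x : ℝ} (hab : Disjoint (Ioo a b) C) (hx : x ∈ C) : x ∉ Ioo a b :=
    fun hx' => Set.disjoint_left.mp hab hx' hx
  refine ⟨le_antisymm ?_ ?_, le_antisymm ?_ ?_⟩ <;> by_contra! hlt
  · exact notMem h'.2.2.2 h.1 ⟨hlt, hm.1.trans hm'.2⟩
  · exact notMem h.2.2.2 h'.1 ⟨hlt, hm'.1.trans hm.2⟩
  · exact notMem h.2.2.2 h'.2.1 ⟨hm.1.trans hm'.2, hlt⟩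
  · exact notMem h'.2.2.2 h.2.1 ⟨hm'.1.trans hm.2, hlt⟩

end Gaps

theorem SparseSet.isTotallyDisconnected {σ : ℝ} {C : Set ℝ} (h : SparseSet σ C) :
    IsTotallyDisconnected C := by
  intro t htC ht
  by_contra hnt
  obtain ⟨a, ha, b, hb, hab⟩ : ∃ a ∈ t, ∃ b ∈ t, a < b := by
    obtain ⟨a, ha, b, hb, hne⟩ := Set.not_subsingleton_iff.mp hnt
    rcases hne.lt_or_gt with hlt | hlt
    exacts [⟨a, ha, b, hb, hlt⟩, ⟨b, hb, a, ha, hlt⟩]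
  obtain ⟨α, β, haα, hαβ, hβb, hgap, -⟩ := h a (htC ha) b (htC hb) hab
  have hmid : (α + β) / 2 ∈ t := ht.Icc_subset ha hb ⟨by linarith, by linarith⟩
  have : (α + β) / 2 ∈ Ioo α β ∩ C := ⟨⟨by linarith, by linarith⟩, htC hmid⟩
  simp [hgap] at this

theorem StrictMono.eq_of_mapsTo_of_finite {α : Type*} [LinearOrder α] {f : α → α}
    {S : Set α} (hf : StrictMono f) (hS : S.Finite) (hmaps : MapsTo f S S) {x : α}
    (hx : x ∈ S) : f x = x := by
  have : Finite S := hS.to_subtype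
  have hr : StrictMono (hmaps.restrict f S S) := fun _ _ h => hf h
  have hfx : hmaps.restrict f S S ⟨x, hx⟩ = ⟨x, hx⟩ := le_antisymm hr.apply_le hr.le_apply
  exact congrArg Subtype.val hfx

open scoped NNReal

namespace SparseCantor

noncomputable def len : ℕ → ℝ
  | 0 => 1
  | n + 1 => len n / 2 ^ (n + 2)

theorem len_pos : ∀ n, 0 < len n
  | 0 => one_pos
  | n + 1 => div_pos (len_pos n) (by positivity)

theorem len_succ_mul_two_pow (n : ℕ) : len (n + 1) * 2 ^ (n + 1) = len n / 2 := by
  rw [len]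
  field_simp
  ring

theorem four_mul_len_succ_le (n : ℕ) : 4 * len (n + 1) ≤ len n := by
  have h : (2 : ℝ) ≤ 2 ^ (n + 1) := le_self_pow₀ one_le_two (by omega)
  nlinarith [len_succ_mul_two_pow n, len_pos (n + 1)]

theorem len_antitone : Antitone len :=
  antitone_nat_of_succ_le fun n => by linarith [four_mul_len_succ_le n, len_pos (n + 1)]

theorem tendsto_len_atTop : Tendsto len atTop (𝓝 0) := by
  have hgeom : ∀ n, len n ≤ (1 / 4 : ℝ) ^ n := by
    intro n
    induction n with
    | zero => simp [len]
    | succ n ih => rw [pow_succ]; linarith [four_mul_len_succ_le n]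
  exact squeeze_zero (fun n => (len_pos n).le) hgeom
    (tendsto_pow_atTop_nhds_zero_of_lt_one (by norm_num) (by norm_num))

noncomputable def gapLen (n : ℕ) : ℝ := len n - 2 * len (n + 1)

theorem len_le_two_mul_gapLen (n : ℕ) : len n ≤ 2 * gapLen n := by
  unfold gapLen
  linarith [four_mul_len_succ_le n]

theorem gapLen_le_len (n : ℕ) : gapLen n ≤ len n := by
  unfold gapLen
  linarith [len_pos (n + 1)]

theorem gapLen_pos (n : ℕ) : 0 < gapLen n := by
  linarith [len_le_two_mul_gapLen n, len_pos n]

theorem gapLen_mul_two_pow_le {m n : ℕ} (h : m < n) : gapLen n * 2 ^ n ≤ gapLen m := by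
  obtain ⟨k, rfl⟩ := Nat.exists_eq_add_of_lt h
  calc gapLen (m + k + 1) * 2 ^ (m + k + 1)
      ≤ len (m + k + 1) * 2 ^ (m + k + 1) := by gcongr; exact gapLen_le_len _
    _ = len (m + k) / 2 := len_succ_mul_two_pow _
    _ ≤ len m / 2 := by gcongr; exact len_antitone (by omega)
    _ ≤ gapLen m := by linarith [len_le_two_mul_gapLen m]

theorem eq_of_gapLen_le_mul {m n : ℕ} {K : ℝ} (hK : K < 2 ^ n)
    (hmn : gapLen m ≤ K * gapLen n) (hnm : gapLen n ≤ K * gapLen m) : m = n := by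
  rcases lt_trichotomy m n with h | h | h
  · nlinarith [gapLen_mul_two_pow_le h, mul_pos (sub_pos.mpr hK) (gapLen_pos n)]
  · exact h
  · have h2 : (2 : ℝ) ^ n < 2 ^ m := pow_lt_pow_right₀ one_lt_two h
    nlinarith [gapLen_mul_two_pow_le h, mul_pos (sub_pos.mpr (hK.trans h2)) (gapLen_pos m)]

/-- An address lists the choices of left (`false`) or right (`true`) child from the deepest
one up, so `b :: s` addresses a child of the interval addressed by `s`. -/
noncomputable def leftEnd : List Bool → ℝ
  | [] => 0
  | false :: s => leftEnd s
  | true :: s => leftEnd s + len s.length - len (s.length + 1)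

noncomputable def rightEnd (s : List Bool) : ℝ := leftEnd s + len s.length

noncomputable def interval (s : List Bool) : Set ℝ := Icc (leftEnd s) (rightEnd s)

noncomputable def gapLeft (s : List Bool) : ℝ := rightEnd (false :: s)

noncomputable def gapRight (s : List Bool) : ℝ := leftEnd (true :: s)

theorem rightEnd_sub_leftEnd (s : List Bool) : rightEnd s - leftEnd s = len s.length :=
  add_sub_cancel_left _ _

theorem leftEnd_lt_rightEnd (s : List Bool) : leftEnd s < rightEnd s := by
  linarith [rightEnd_sub_leftEnd s, len_pos s.length]

theorem leftEnd_mem_interval (s : List Bool) : leftEnd s ∈ interval s :=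
  left_mem_Icc.mpr (leftEnd_lt_rightEnd s).le

theorem rightEnd_mem_interval (s : List Bool) : rightEnd s ∈ interval s :=
  right_mem_Icc.mpr (leftEnd_lt_rightEnd s).le

theorem rightEnd_cons_true (s : List Bool) : rightEnd (true :: s) = rightEnd s := by
  simp only [rightEnd, leftEnd, List.length_cons]
  ring

theorem gapLeft_eq (s : List Bool) : gapLeft s = leftEnd s + len (s.length + 1) := rfl

theorem gapRight_eq (s : List Bool) : gapRight s = rightEnd s - len (s.length + 1) := by
  simp only [gapRight, leftEnd, rightEnd]

theorem gapRight_sub_gapLeft (s : List Bool) : gapRight s - gapLeft s = gapLen s.length := by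
  rw [gapRight_eq, gapLeft_eq, rightEnd, gapLen]
  ring

theorem leftEnd_le_gapLeft (s : List Bool) : leftEnd s ≤ gapLeft s := by
  linarith [gapLeft_eq s, len_pos (s.length + 1)]

theorem gapRight_le_rightEnd (s : List Bool) : gapRight s ≤ rightEnd s := by
  linarith [gapRight_eq s, len_pos (s.length + 1)]

theorem gapLeft_lt_gapRight (s : List Bool) : gapLeft s < gapRight s := by
  linarith [gapRight_sub_gapLeft s, gapLen_pos s.length]

theorem interval_cons_false (s : List Bool) :
    interval (false :: s) = Icc (leftEnd s) (gapLeft s) := rfl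

theorem interval_cons_true (s : List Bool) :
    interval (true :: s) = Icc (gapRight s) (rightEnd s) := by
  rw [interval, rightEnd_cons_true]
  rfl

theorem interval_cons_subset (b : Bool) (s : List Bool) : interval (b :: s) ⊆ interval s := by
  cases b
  · rw [interval_cons_false]
    exact Icc_subset_Icc le_rfl ((gapLeft_lt_gapRight s).le.trans (gapRight_le_rightEnd s))
  · rw [interval_cons_true]
    exact Icc_subset_Icc ((leftEnd_le_gapLeft s).trans (gapLeft_lt_gapRight s).le) le_rfl

theorem interval_nil : interval [] = Icc 0 1 := by
  simp [interval, rightEnd, leftEnd, len]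

theorem disjoint_interval :
    ∀ {s t : List Bool}, s.length = t.length → s ≠ t → Disjoint (interval s) (interval t)
  | [], [], _, hne => (hne rfl).elim
  | [], _ :: _, hlen, _ => by simp at hlen
  | _ :: _, [], hlen, _ => by simp at hlen
  | a :: s, b :: t, hlen, hne => by
    by_cases hst : s = t
    · subst hst
      have hsep : Disjoint (interval (false :: s)) (interval (true :: s)) := by
        rw [interval_cons_false, interval_cons_true, Set.disjoint_left]
        exact fun x hx hy => (hy.1.trans hx.2).not_gt (gapLeft_lt_gapRight s)
      cases a <;> cases b
      exacts [(hne rfl).elim, hsep, hsep.symm, (hne rfl).elim]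
    · exact (disjoint_interval (by simpa using hlen) hst).mono
        (interval_cons_subset a s) (interval_cons_subset b t)

noncomputable def stage (n : ℕ) : Set ℝ := ⋃ s ∈ {s : List Bool | s.length = n}, interval s

noncomputable def C₀ : Set ℝ := ⋂ n, stage n

theorem mem_stage {x : ℝ} {n : ℕ} :
    x ∈ stage n ↔ ∃ s : List Bool, s.length = n ∧ x ∈ interval s := by
  simp [stage]

theorem stage_antitone : Antitone stage := by
  refine antitone_nat_of_succ_le fun n x hx => ?_
  obtain ⟨t, ht, hxt⟩ := mem_stage.mp hx
  obtain ⟨b, s, rfl⟩ := List.exists_cons_of_length_eq_add_one ht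
  exact mem_stage.mpr ⟨s, by simpa using ht, interval_cons_subset b s hxt⟩

theorem exists_mem_interval {x : ℝ} (hx : x ∈ C₀) (n : ℕ) :
    ∃ s : List Bool, s.length = n ∧ x ∈ interval s :=
  mem_stage.mp (mem_iInter.mp hx n)

theorem mem_C₀_of_forall_le {x : ℝ} (N : ℕ) (h : ∀ n, N ≤ n → x ∈ stage n) : x ∈ C₀ :=
  mem_iInter.mpr fun n => stage_antitone (le_max_left n N) (h _ (le_max_right n N))

theorem C₀_subset_Icc : C₀ ⊆ Icc 0 1 := fun x hx => by
  obtain ⟨s, hs, hxs⟩ := exists_mem_interval hx 0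
  rwa [List.length_eq_zero_iff.mp hs, interval_nil] at hxs

theorem leftEnd_mem_C₀ (s : List Bool) : leftEnd s ∈ C₀ := by
  have hpad : ∀ k, leftEnd (List.replicate k false ++ s) = leftEnd s := by
    intro k
    induction k with
    | zero => rfl
    | succ k ih => rwa [List.replicate_succ, List.cons_append, leftEnd]
  refine mem_C₀_of_forall_le s.length fun n hn => mem_stage.mpr
    ⟨List.replicate (n - s.length) false ++ s, by simp; omega, ?_⟩
  rw [← hpad (n - s.length)]
  exact leftEnd_mem_interval _

theorem rightEnd_mem_C₀ (s : List Bool) : rightEnd s ∈ C₀ := by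
  have hpad : ∀ k, rightEnd (List.replicate k true ++ s) = rightEnd s := by
    intro k
    induction k with
    | zero => rfl
    | succ k ih => rwa [List.replicate_succ, List.cons_append, rightEnd_cons_true]
  refine mem_C₀_of_forall_le s.length fun n hn => mem_stage.mpr
    ⟨List.replicate (n - s.length) true ++ s, by simp; omega, ?_⟩
  rw [← hpad (n - s.length)]
  exact rightEnd_mem_interval _

theorem exists_cons_mem_interval {x : ℝ} (hx : x ∈ C₀) {s : List Bool} (hxs : x ∈ interval s) :
    ∃ b, x ∈ interval (b :: s) := by
  obtain ⟨t, ht, hxt⟩ := exists_mem_interval hx (s.length + 1)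
  obtain ⟨b, t, rfl⟩ := List.exists_cons_of_length_eq_add_one ht
  obtain rfl : t = s := by
    by_contra hne
    exact Set.disjoint_left.mp (disjoint_interval (by simpa using ht) hne)
      (interval_cons_subset b t hxt) hxs
  exact ⟨b, hxt⟩

theorem disjoint_gap_C₀ (s : List Bool) : Disjoint (Ioo (gapLeft s) (gapRight s)) C₀ := by
  rw [Set.disjoint_left]
  rintro x ⟨hl, hr⟩ hx
  have hxs : x ∈ interval s :=
    ⟨(leftEnd_le_gapLeft s).trans hl.le, hr.le.trans (gapRight_le_rightEnd s)⟩
  obtain ⟨b, hb⟩ := exists_cons_mem_interval hx hxs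
  cases b
  · rw [interval_cons_false] at hb
    exact hl.not_ge hb.2
  · rw [interval_cons_true] at hb
    exact hr.not_ge hb.1

theorem isGap_gap (s : List Bool) : IsGap C₀ (gapLeft s) (gapRight s) :=
  ⟨rightEnd_mem_C₀ (false :: s), leftEnd_mem_C₀ (true :: s), gapLeft_lt_gapRight s,
    disjoint_gap_C₀ s⟩

theorem exists_mem_gap_of_notMem {x : ℝ} (hx : x ∈ Icc 0 1) (hxC : x ∉ C₀) :
    ∃ s, x ∈ Ioo (gapLeft s) (gapRight s) := by
  have hstage : ∀ n, x ∈ stage n ∨ ∃ s, x ∈ Ioo (gapLeft s) (gapRight s) := by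
    intro n
    induction n with
    | zero => exact Or.inl (mem_stage.mpr ⟨[], rfl, interval_nil ▸ hx⟩)
    | succ n ih =>
      refine ih.elim (fun h => ?_) Or.inr
      obtain ⟨s, rfl, hxs⟩ := mem_stage.mp h
      rcases le_or_gt x (gapLeft s) with hl | hl
      · refine Or.inl (mem_stage.mpr ⟨false :: s, rfl, ?_⟩)
        rw [interval_cons_false]
        exact ⟨hxs.1, hl⟩
      rcases lt_or_ge x (gapRight s) with hr | hr
      · exact Or.inr ⟨s, hl, hr⟩
      · refine Or.inl (mem_stage.mpr ⟨true :: s, rfl, ?_⟩)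
        rw [interval_cons_true]
        exact ⟨hr, hxs.2⟩
  obtain ⟨n, hn⟩ : ∃ n, x ∉ stage n := by simpa [C₀] using hxC
  exact (hstage n).resolve_left hn

theorem exists_eq_of_isGap {p q : ℝ} (h : IsGap C₀ p q) :
    ∃ s, p = gapLeft s ∧ q = gapRight s := by
  have hm : (p + q) / 2 ∈ Ioo p q := ⟨by linarith [h.2.2.1], by linarith [h.2.2.1]⟩
  have hmI : (p + q) / 2 ∈ Icc (0 : ℝ) 1 :=
    ⟨by linarith [(C₀_subset_Icc h.1).1, hm.1], by linarith [(C₀_subset_Icc h.2.1).2, hm.2]⟩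
  obtain ⟨s, hs⟩ := exists_mem_gap_of_notMem hmI (Set.disjoint_left.mp h.2.2.2 hm)
  exact ⟨s, h.eq_of_mem_Ioo (isGap_gap s) hm hs⟩

theorem exists_gap_between {a b : ℝ} (ha : a ∈ C₀) (hb : b ∈ C₀) (hab : a < b) :
    ∃ s, a ≤ gapLeft s ∧ gapRight s ≤ b ∧ b - a ≤ len s.length := by
  have descend : ∀ k s, a ∈ interval s → b ∈ interval s → len (s.length + k) < b - a →
      ∃ s, a ≤ gapLeft s ∧ gapRight s ≤ b ∧ b - a ≤ len s.length := by
    intro k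
    induction k with
    | zero =>
      intro s has hbs hlen
      rw [add_zero] at hlen
      linarith [has.1, hbs.2, rightEnd_sub_leftEnd s]
    | succ k ih =>
      intro s has hbs hlen
      have hlen' : len ((s.length + 1) + k) < b - a := by rwa [Nat.add_right_comm, add_assoc]
      obtain ⟨c, hac⟩ := exists_cons_mem_interval ha has
      obtain ⟨d, hbd⟩ := exists_cons_mem_interval hb hbs
      cases c <;> cases d
      · exact ih _ hac hbd hlen'
      · rw [interval_cons_false] at hac
        rw [interval_cons_true] at hbd
        exact ⟨s, hac.2, hbd.1, by linarith [has.1, hbs.2, rightEnd_sub_leftEnd s]⟩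
      · rw [interval_cons_true] at hac
        rw [interval_cons_false] at hbd
        linarith [hac.1, hbd.2, gapLeft_lt_gapRight s]
      · exact ih _ hac hbd hlen'
  obtain ⟨n, hn⟩ := (tendsto_len_atTop.eventually (gt_mem_nhds (sub_pos.mpr hab))).exists
  exact descend n [] (interval_nil ▸ C₀_subset_Icc ha) (interval_nil ▸ C₀_subset_Icc hb)
    (by simpa using hn)

theorem sparseSet_C₀ : SparseSet (1 / 2) C₀ := by
  intro a ha b hb hab
  obtain ⟨s, has, hsb, hlen⟩ := exists_gap_between ha hb hab
  refine ⟨gapLeft s, gapRight s, has, gapLeft_lt_gapRight s, hsb,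
    disjoint_iff_inter_eq_empty.mp (disjoint_gap_C₀ s), ?_⟩
  linarith [gapRight_sub_gapLeft s, len_le_two_mul_gapLen s.length]

theorem isClosed_C₀ : IsClosed C₀ :=
  isClosed_iInter fun n => (List.finite_length_eq Bool n).isClosed_biUnion fun _ _ => isClosed_Icc

theorem perfect_C₀ : Perfect C₀ := by
  refine ⟨isClosed_C₀, fun x hx => ?_⟩
  rw [accPt_iff_frequently, Metric.nhds_basis_ball.frequently_iff]
  intro ε hε
  obtain ⟨n, hn⟩ := (tendsto_len_atTop.eventually (gt_mem_nhds hε)).exists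
  obtain ⟨s, rfl, hxs⟩ := exists_mem_interval hx n
  have hclose : ∀ y ∈ interval s, y ∈ Metric.ball x ε := fun y hy =>
    (Real.dist_le_of_mem_Icc hy hxs).trans_lt (by rwa [rightEnd_sub_leftEnd])
  by_cases hxl : x = leftEnd s
  · refine ⟨rightEnd s, hclose _ (rightEnd_mem_interval s), ?_, rightEnd_mem_C₀ s⟩
    rw [hxl]
    exact (leftEnd_lt_rightEnd s).ne'
  · exact ⟨leftEnd s, hclose _ (leftEnd_mem_interval s), Ne.symm hxl, leftEnd_mem_C₀ s⟩

theorem isCantorSet_C₀ : IsCantorSet C₀ :=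
  ⟨⟨0, leftEnd_mem_C₀ []⟩, isCompact_Icc.of_isClosed_subset isClosed_C₀ C₀_subset_Icc,
    perfect_C₀, sparseSet_C₀.isTotallyDisconnected⟩

theorem C₀_subset_closure_gapLeft (N : ℕ) : C₀ ⊆ closure (gapLeft '' {s | N ≤ s.length}) := by
  intro x hx
  rw [Metric.mem_closure_iff]
  intro ε hε
  obtain ⟨n, hnε, hNn⟩ :=
    ((tendsto_len_atTop.eventually (gt_mem_nhds hε)).and (eventually_ge_atTop N)).exists
  obtain ⟨s, rfl, hxs⟩ := exists_mem_interval hx n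
  have hgap : gapLeft s ∈ interval s := interval_cons_subset false s (rightEnd_mem_interval _)
  exact ⟨gapLeft s, ⟨s, hNn, rfl⟩,
    (Real.dist_le_of_mem_Icc hxs hgap).trans_lt (by rwa [rightEnd_sub_leftEnd])⟩

theorem gapLen_le_mul_of_lipschitzOnWith {f : ℝ → ℝ} {K : ℝ≥0} (hf : LipschitzOnWith K f (Icc 0 1))
    {s t : List Bool} (hl : f (gapLeft s) = gapLeft t) (hr : f (gapRight s) = gapRight t) :
    gapLen t.length ≤ K * gapLen s.length := by
  have h := hf.dist_le_mul (gapRight s) (C₀_subset_Icc (isGap_gap s).2.1)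
    (gapLeft s) (C₀_subset_Icc (isGap_gap s).1)
  rwa [hl, hr, Real.dist_eq, Real.dist_eq, gapRight_sub_gapLeft, gapRight_sub_gapLeft,
    abs_of_pos (gapLen_pos _), abs_of_pos (gapLen_pos _)] at h

theorem length_eq_of_maps_gap {φ ψ : ℝ → ℝ} {K : ℝ≥0} (hφ : LipschitzOnWith K φ (Icc 0 1))
    (hψ : LipschitzOnWith K ψ (Icc 0 1)) (hinv : Function.LeftInverse ψ φ) {s t : List Bool}
    (hK : (K : ℝ) < 2 ^ s.length) (hl : φ (gapLeft s) = gapLeft t)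
    (hr : φ (gapRight s) = gapRight t) : t.length = s.length :=
  eq_of_gapLen_le_mul hK (gapLen_le_mul_of_lipschitzOnWith hφ hl hr)
    (gapLen_le_mul_of_lipschitzOnWith hψ (by rw [← hl, hinv]) (by rw [← hr, hinv]))

theorem apply_gapLeft_eq_of_mapsTo {φ : ℝ → ℝ} (hφ : StrictMono φ) {n : ℕ}
    (hmaps : ∀ s : List Bool, s.length = n →
      ∃ t : List Bool, t.length = n ∧ φ (gapLeft s) = gapLeft t)
    {s : List Bool} (hs : s.length = n) : φ (gapLeft s) = gapLeft s := by
  refine hφ.eq_of_mapsTo_of_finite ((List.finite_length_eq Bool n).image gapLeft) ?_ ⟨s, hs, rfl⟩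
  rintro _ ⟨s, hs, rfl⟩
  obtain ⟨t, ht, h⟩ := hmaps s hs
  exact ⟨t, ht, h.symm⟩

theorem eqOn_id_of_isC1DiffeoPair {φ ψ : ℝ → ℝ} (h : IsC1DiffeoPair φ ψ) (hφ : StrictMono φ)
    (hC : φ '' C₀ = C₀) : EqOn φ id C₀ := by
  obtain ⟨Kφ, hKφ⟩ := h.1.locallyLipschitz.locallyLipschitzOn.exists_lipschitzOnWith_of_compact
    (isCompact_Icc (a := (0 : ℝ)) (b := 1))
  obtain ⟨Kψ, hKψ⟩ := h.2.1.locallyLipschitz.locallyLipschitzOn.exists_lipschitzOnWith_of_compact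
    (isCompact_Icc (a := (0 : ℝ)) (b := 1))
  obtain ⟨N, hN⟩ := pow_unbounded_of_one_lt ((max Kφ Kψ : ℝ≥0) : ℝ) one_lt_two
  have hfix : EqOn φ id (gapLeft '' {s | N ≤ s.length}) := by
    rintro _ ⟨s, hs, rfl⟩
    refine apply_gapLeft_eq_of_mapsTo hφ (fun s' hs' => ?_) rfl
    obtain ⟨t, hl, hr⟩ := exists_eq_of_isGap ((isGap_gap s').image hφ hC)
    have hK : ((max Kφ Kψ : ℝ≥0) : ℝ) < 2 ^ s'.length :=
      hN.trans_le (pow_le_pow_right₀ one_le_two (hs' ▸ hs))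
    exact ⟨t, (length_eq_of_maps_gap (hKφ.weaken (le_max_left _ _))
      (hKψ.weaken (le_max_right _ _)) h.2.2.1 hK hl hr).trans hs', hl⟩
  exact (hfix.closure h.1.continuous continuous_id).mono (C₀_subset_closure_gapLeft N)

end SparseCantor

open SparseCantor in
/-- There exists a sparse Cantor set `C₀ ⊂ [0,1]` such that every
orientation-preserving `C¹` diffeomorphism of ℝ preserving `C₀` restricts to the
identity on `C₀`, i.e. `diff^{1,+}(C₀)` is trivial. -/
theorem exists_sparse_cantor_trivial_diffeo_group :
    ∃ (C : Set ℝ) (σ : ℝ), 0 < σ ∧ C ⊆ Set.Icc 0 1 ∧ IsCantorSet C ∧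
      SparseSet σ C ∧
      ∀ φ ψ : ℝ → ℝ, IsC1DiffeoPair φ ψ → StrictMono φ → φ '' C = C →
        ∀ x ∈ C, φ x = x :=
  ⟨C₀, 1 / 2, by norm_num, C₀_subset_Icc, isCantorSet_C₀, sparseSet_C₀,
    fun _ _ h hφ hC _ hx => eqOn_id_of_isC1DiffeoPair h hφ hC hx⟩
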